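/- Let $S$ be a real trigonometric polynomial of degree at most $n$, let $\alpha\in(0,1)$, and suppose the set $\{t\in[0,2\pi): |S(t)|\leq\alpha\|S\|_K\}$ is a finite disjoint union of intervals $I_1,\dots,I_m$, each containing a point $y_j$ with $|S(y_j)|=\alpha\|S\|_K$. If $\mu_j$ denotes the number of zeros of $S$ (with multiplicity) in $I_j$, then $\mu_j\leq \frac{en}{\alpha}|I_j|$ for each $j$. -/

import Mathlib

/-!
Extend `S` to the entire function `F(z) = a₀ + ∑ (aⱼ cos jz + bⱼ sin jz)`. It satisfies
`‖F z‖ ≤ C e^{n |Im z|}` and `|F| ≤ ‖S‖` on `ℝ`, so Phragmén–Lindelöf upgrades this to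
`‖F z‖ ≤ ‖S‖ e^{n |Im z|}`, and Cauchy's estimate on circles of radius `N / n` around real points
gives `|S⁽ᴺ⁾| ≤ N! ‖S‖ (e n / N)^N` on `ℝ`.

If `S` has `N` zeros `x₁, …, x_N` (with multiplicity) within distance `r` of `t₀`, then
`S - c ∏ (t - xᵢ)` with `c` chosen to vanish at `t₀` has `N + 1` zeros, so by the generalized Rolle
theorem its `N`-th derivative `S⁽ᴺ⁾ - c N!` vanishes somewhere. Hence
`|S t₀| ≤ rᴺ / N! ‖S⁽ᴺ⁾‖ ≤ ‖S‖ (e n r / N)ᴺ`, which yields `N |S t₀| ≤ e n r ‖S‖`.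
Applied with `t₀ = y_j` and `r = |I_j|` this is the theorem; `‖S‖ > 0` because `[0, 2π)` is not a
finite union of closed intervals.
-/

open Finset

open scoped ContDiff Nat ComplexConjugate

def HasZeros (f : ℝ → ℝ) (Z : Multiset ℝ) : Prop :=
  ∀ x, ∀ i < Z.count x, iteratedDeriv i f x = 0

theorem hasZeros_sum_replicate {f : ℝ → ℝ} {s : Finset ℝ} {m : ℝ → ℕ}
    (h : ∀ x ∈ s, ∀ i < m x, iteratedDeriv i f x = 0) :
    HasZeros f (∑ x ∈ s, Multiset.replicate (m x) x) := by
  intro x i hi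
  simp only [Multiset.count_sum', Multiset.count_replicate, sum_ite_eq'] at hi
  split_ifs at hi with hx
  · exact h x hx i hi
  · omega

theorem exists_finset_deriv_eq_zero_card_le {f : ℝ → ℝ} (hf : Differentiable ℝ f)
    {s : Finset ℝ} (hs : ∀ x ∈ s, f x = 0) :
    ∃ t : Finset ℝ, Disjoint t s ∧ (∀ x ∈ t, deriv f x = 0) ∧ #s ≤ #t + 1 := by
  have hRolle : ∀ x ∈ s, ∀ y ∈ s, x < y → ∃ c ∈ Set.Ioo x y, deriv f c = 0 :=
    fun x hx y hy hxy =>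
      exists_deriv_eq_zero hxy hf.continuous.continuousOn ((hs x hx).trans (hs y hy).symm)
  choose! c hc using hRolle
  set T := ((s ×ˢ s).filter fun p => p.1 < p.2).image fun p => c p.1 p.2
  refine ⟨T \ s, disjoint_sdiff_self_left, fun z hz => ?_, card_le_sdiff_of_interleaved ?_⟩
  · obtain ⟨⟨x, y⟩, hp, rfl⟩ := mem_image.mp (mem_sdiff.mp hz).1
    simp only [mem_filter, mem_product] at hp
    exact (hc x hp.1.1 y hp.1.2 hp.2).2
  · intro x hx y hy hxy _
    refine ⟨c x y, mem_image.mpr ⟨(x, y), ?_, rfl⟩, (hc x hx y hy hxy).1⟩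
    exact mem_filter.mpr ⟨mem_product.mpr ⟨hx, hy⟩, hxy⟩

theorem iteratedDeriv_sub_const_mul {f g : ℝ → ℝ} (hf : ContDiff ℝ ∞ f) (hg : ContDiff ℝ ∞ g)
    (c : ℝ) (i : ℕ) (x : ℝ) :
    iteratedDeriv i (fun t => f t - c * g t) x =
      iteratedDeriv i f x - c * iteratedDeriv i g x := by
  have hg' : ContDiffAt ℝ i g x := hg.contDiffAt.of_le (by exact_mod_cast le_top)
  rw [show (fun t => f t - c * g t) = f - fun t => c * g t from rfl,
    iteratedDeriv_sub (hf.contDiffAt.of_le (by exact_mod_cast le_top)) (contDiffAt_const.mul hg'),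
    iteratedDeriv_const_mul c hg']

namespace HasZeros

variable {f g : ℝ → ℝ} {Z : Multiset ℝ}

theorem exists_hasZeros_deriv (hZ : HasZeros f Z) (hf : Differentiable ℝ f) :
    ∃ Z', HasZeros (deriv f) Z' ∧ Multiset.card Z ≤ Multiset.card Z' + 1 := by
  obtain ⟨t, hts, ht, hcard⟩ := exists_finset_deriv_eq_zero_card_le hf (s := Z.toFinset)
    fun x hx => by simpa using hZ x 0 (Multiset.count_pos.mpr (Multiset.mem_toFinset.mp hx))
  -- lower every multiplicity by one and add the Rolle points between consecutive zeros
  refine ⟨Z - Z.dedup + t.val, fun x i hi => ?_, ?_⟩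
  · rw [Multiset.count_add, Multiset.count_sub, Multiset.count_dedup] at hi
    by_cases hxt : x ∈ t
    · have hxZ : x ∉ Z := fun h => disjoint_left.mp hts hxt (Multiset.mem_toFinset.mpr h)
      rw [Multiset.count_eq_one_of_mem t.nodup hxt, Multiset.count_eq_zero.mpr hxZ] at hi
      obtain rfl : i = 0 := by omega
      simpa using ht x hxt
    · rw [Multiset.count_eq_zero.mpr hxt] at hi
      rw [← iteratedDeriv_succ']
      have hxZ : x ∈ Z := by
        by_contra h
        simp [Multiset.count_eq_zero.mpr h] at hi
      rw [if_pos hxZ] at hi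
      exact hZ x (i + 1) (by omega)
  · have := Multiset.card_le_card (Multiset.dedup_le Z)
    rw [Multiset.card_add, Multiset.card_sub (Multiset.dedup_le Z)]
    rw [Multiset.card_toFinset] at hcard
    simp only [card_val]
    omega

theorem exists_iteratedDeriv_eq_zero (hZ : HasZeros f Z) (hf : ContDiff ℝ ∞ f) {N : ℕ}
    (hN : N < Multiset.card Z) : ∃ ξ, iteratedDeriv N f ξ = 0 := by
  induction N generalizing f Z with
  | zero =>
    obtain ⟨x, hx⟩ := Multiset.card_pos_iff_exists_mem.mp hN
    exact ⟨x, hZ x 0 (Multiset.count_pos.mpr hx)⟩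
  | succ N ih =>
    obtain ⟨Z', hZ', hcard⟩ := hZ.exists_hasZeros_deriv (hf.differentiable (by simp))
    obtain ⟨ξ, hξ⟩ := ih hZ' (contDiff_infty_iff_deriv.mp hf).2 (by omega)
    exact ⟨ξ, by rwa [iteratedDeriv_succ']⟩

theorem cons (hZ : HasZeros f Z) {y : ℝ} (hyZ : y ∉ Z) (hy : f y = 0) :
    HasZeros f (y ::ₘ Z) := by
  intro x i hi
  rw [Multiset.count_cons] at hi
  by_cases hxy : x = y
  · subst hxy
    simp only [Multiset.count_eq_zero.mpr hyZ, if_true, zero_add] at hi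
    obtain rfl : i = 0 := by omega
    simpa using hy
  · exact hZ x i (by simpa [hxy] using hi)

theorem sub_const_mul (hZf : HasZeros f Z) (hZg : HasZeros g Z) (hf : ContDiff ℝ ∞ f)
    (hg : ContDiff ℝ ∞ g) (c : ℝ) : HasZeros (fun t => f t - c * g t) Z := by
  intro x i hi
  rw [iteratedDeriv_sub_const_mul hf hg, hZf x i hi, hZg x i hi, mul_zero, sub_zero]

end HasZeros

section Hermite

open Polynomial

theorem Polynomial.iteratedDeriv_eval {𝕜 : Type*} [NontriviallyNormedField 𝕜] (p : 𝕜[X])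
    (k : ℕ) : iteratedDeriv k (fun t => p.eval t) = fun t => (derivative^[k] p).eval t := by
  induction k generalizing p with
  | zero => simp
  | succ k ih =>
    rw [iteratedDeriv_succ', Function.iterate_succ_apply, ← ih,
      show _root_.deriv (fun t => p.eval t) = fun t => (derivative p).eval t by
        ext t; exact p.deriv]

theorem Polynomial.Monic.iterate_derivative_natDegree {R : Type*} [Semiring R] {p : R[X]}
    (hp : p.Monic) : derivative^[p.natDegree] p = C (p.natDegree ! : R) := by
  rw [eq_C_of_natDegree_le_zero ((natDegree_iterate_derivative p _).trans (by simp)),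
    coeff_iterate_derivative, zero_add, Nat.descFactorial_self, hp.coeff_natDegree, nsmul_one]

theorem hasZeros_prod_X_sub_C (Z : Multiset ℝ) :
    HasZeros (fun t => ((Z.map fun x => X - C x).prod).eval t) Z := by
  intro x i hi
  rw [Polynomial.iteratedDeriv_eval]
  apply isRoot_iterate_derivative_of_lt_rootMultiplicity
  rwa [← count_roots, roots_multiset_prod_X_sub_C]

theorem Polynomial.contDiff_eval {𝕜 : Type*} [NontriviallyNormedField 𝕜] (p : 𝕜[X])
    (n : WithTop ℕ∞) : ContDiff 𝕜 n fun t => p.eval t := by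
  simpa using p.contDiff_aeval (𝕜 := 𝕜) n

theorem abs_eval_multiset_prod_X_sub_C_le {Z : Multiset ℝ} {y r : ℝ}
    (hr : ∀ x ∈ Z, |y - x| ≤ r) :
    |((Z.map fun x => X - C x).prod).eval y| ≤ r ^ Multiset.card Z :=
  calc |((Z.map fun x => X - C x).prod).eval y|
      _ = (absHom : ℝ →*₀ ℝ) (Z.map fun x => y - x).prod := by
        simp only [eval_multiset_prod, Multiset.map_map, Function.comp_apply, eval_sub, eval_X,
          eval_C]
        rfl
      _ = ((Z.map fun x => y - x).map (absHom : ℝ →*₀ ℝ)).prod := map_multiset_prod _ _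
      _ ≤ r ^ Multiset.card (Z.map fun x => y - x) :=
        Multiset.prod_map_le_pow_card (fun _ _ => abs_nonneg _)
          (Multiset.forall_mem_map_iff.mpr hr)
      _ = r ^ Multiset.card Z := by rw [Multiset.card_map]

theorem HasZeros.abs_mul_factorial_le {f : ℝ → ℝ} {Z : Multiset ℝ} (hZ : HasZeros f Z)
    (hf : ContDiff ℝ ∞ f) {K : ℝ} (hK : ∀ t, |iteratedDeriv (Multiset.card Z) f t| ≤ K)
    {y r : ℝ} (hr : ∀ x ∈ Z, |y - x| ≤ r) :
    |f y| * (Multiset.card Z)! ≤ K * r ^ Multiset.card Z := by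
  set N := Multiset.card Z
  set P := (Z.map fun x => X - C x).prod
  have hP : P.Monic := monic_multiset_prod_of_monic _ _ fun x _ => monic_X_sub_C x
  have hPN : P.natDegree = N := natDegree_multiset_prod_X_sub_C_eq_card Z
  have hPf : ContDiff ℝ ∞ fun t => P.eval t := P.contDiff_eval ∞
  have hPy : |P.eval y| ≤ r ^ N := abs_eval_multiset_prod_X_sub_C_le hr
  have hK0 : 0 ≤ K := (abs_nonneg _).trans (hK 0)
  by_cases hyZ : y ∈ Z
  · have hfy : f y = 0 := by simpa using hZ y 0 (Multiset.count_pos.mpr hyZ)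
    rw [hfy, abs_zero, zero_mul]
    exact mul_nonneg hK0 ((abs_nonneg _).trans hPy)
  have hy : P.eval y ≠ 0 := by
    simpa [P, eval_multiset_prod, Multiset.prod_eq_zero_iff, sub_eq_zero] using hyZ
  set c := f y / P.eval y
  have hZ' : HasZeros (fun t => f t - c * P.eval t) (y ::ₘ Z) :=
    (hZ.sub_const_mul (hasZeros_prod_X_sub_C Z) hf hPf c).cons hyZ
      (by simp [c, P, div_mul_cancel₀ _ hy])
  obtain ⟨ξ, hξ⟩ := hZ'.exists_iteratedDeriv_eq_zero (hf.sub (contDiff_const.mul hPf)) (N := N)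
    (by simp [N])
  have hPN' : iteratedDeriv N (fun t => P.eval t) ξ = N ! := by
    simp only [P.iteratedDeriv_eval, ← hPN, hP.iterate_derivative_natDegree, eval_C]
  have hξ' : iteratedDeriv N f ξ = c * N ! := by
    rw [iteratedDeriv_sub_const_mul hf hPf, hPN'] at hξ
    linarith
  calc |f y| * N ! = |c * N !| * |P.eval y| := by
        rw [abs_mul, Nat.abs_cast, abs_div]
        field_simp
    _ = |iteratedDeriv N f ξ| * |P.eval y| := by rw [hξ']
    _ ≤ K * r ^ N := mul_le_mul (hK ξ) hPy (abs_nonneg _) hK0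

end Hermite

section ExponentialType

open Complex

theorem norm_le_of_im_nonneg_of_bounded {g : ℂ → ℂ} (hg : Differentiable ℂ g) {B M : ℝ}
    (hB : ∀ z : ℂ, 0 ≤ z.im → ‖g z‖ ≤ B) (hM : ∀ x : ℝ, ‖g x‖ ≤ M) {z : ℂ} (hz : 0 ≤ z.im) :
    ‖g z‖ ≤ M := by
  have key : ∀ w : ℂ, 0 ≤ w.re → ‖g (w * I)‖ ≤ M := fun w hw =>
    PhragmenLindelof.right_half_plane_of_bounded_on_real (f := fun w => g (w * I))
      (hg.comp (differentiable_id.mul_const I)).diffContOnCl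
      ⟨1, one_lt_two, 0, Asymptotics.IsBigO.of_bound B (Filter.eventually_inf_principal.mpr
        (Filter.Eventually.of_forall fun w hw => by simpa using hB _ (by simpa using le_of_lt hw)))⟩
      (Filter.isBoundedUnder_of_eventually_le (a := B)
        (Filter.eventually_atTop.mpr ⟨0, fun x hx => hB _ (by simpa using hx)⟩))
      (fun x => by simpa [mul_assoc] using hM (-x)) hw
  simpa [mul_assoc] using key (-z * I) (by simpa using hz)

theorem norm_le_mul_exp_of_im_nonneg {F : ℂ → ℂ} (hF : Differentiable ℂ F) {σ B M : ℝ}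
    (hB : ∀ z : ℂ, ‖F z‖ ≤ B * Real.exp (σ * |z.im|)) (hM : ∀ x : ℝ, ‖F x‖ ≤ M) {z : ℂ}
    (hz : 0 ≤ z.im) : ‖F z‖ ≤ M * Real.exp (σ * z.im) := by
  have hnorm : ∀ w : ℂ, ‖exp (σ * I * w) * F w‖ = Real.exp (-(σ * w.im)) * ‖F w‖ := fun w => by
    simp [norm_exp, mul_re, mul_im]
  have hg : ‖exp (σ * I * z) * F z‖ ≤ M := by
    refine norm_le_of_im_nonneg_of_bounded (g := fun w => exp (σ * I * w) * F w) (B := B)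
      (by fun_prop) (fun w hw => ?_) (fun x => by rw [hnorm]; simpa using hM x) hz
    rw [hnorm, ← abs_of_nonneg hw]
    calc Real.exp (-(σ * |w.im|)) * ‖F w‖
        _ ≤ Real.exp (-(σ * |w.im|)) * (B * Real.exp (σ * |w.im|)) := by gcongr; exact hB w
        _ = B := by rw [mul_left_comm, ← Real.exp_add, neg_add_cancel, Real.exp_zero, mul_one]
  rw [hnorm] at hg
  calc ‖F z‖ = Real.exp (-(σ * z.im)) * ‖F z‖ * Real.exp (σ * z.im) := by
        rw [mul_right_comm, ← Real.exp_add, neg_add_cancel, Real.exp_zero, one_mul]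
    _ ≤ M * Real.exp (σ * z.im) := by gcongr

theorem norm_le_mul_exp_of_exponentialType {F : ℂ → ℂ} (hF : Differentiable ℂ F) {σ B M : ℝ}
    (hB : ∀ z : ℂ, ‖F z‖ ≤ B * Real.exp (σ * |z.im|)) (hM : ∀ x : ℝ, ‖F x‖ ≤ M) (z : ℂ) :
    ‖F z‖ ≤ M * Real.exp (σ * |z.im|) := by
  rcases le_total 0 z.im with hz | hz
  · rw [abs_of_nonneg hz]
    exact norm_le_mul_exp_of_im_nonneg hF hB hM hz
  · have hF' : Differentiable ℂ (conj ∘ F ∘ conj) := fun w =>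
      differentiableAt_conj_conj_iff.mpr (hF _)
    have := norm_le_mul_exp_of_im_nonneg hF' (B := B) (σ := σ) (M := M) (z := conj z)
      (fun w => by simpa using hB (conj w)) (fun x => by simpa using hM x) (by simpa using hz)
    simpa [abs_of_nonpos hz] using this

theorem iteratedDeriv_real_of_complex {F : ℂ → ℂ} (hF : Differentiable ℂ F) {f : ℝ → ℝ}
    (hFf : ∀ x : ℝ, F x = f x) (k : ℕ) (x : ℝ) :
    iteratedDeriv k f x = (iteratedDeriv k F x).re := by
  induction k generalizing x with
  | zero => simp [hFf]
  | succ k ih =>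
    have hd : HasDerivAt (iteratedDeriv k F) (iteratedDeriv (k + 1) F x) x := by
      rw [iteratedDeriv_succ]
      exact (hF.contDiff.differentiable_iteratedDeriv k (WithTop.coe_lt_top _) _).hasDerivAt
    rw [iteratedDeriv_succ, funext ih]
    exact hd.real_of_complex.deriv

theorem abs_iteratedDeriv_le_of_exponentialType {F : ℂ → ℂ} (hF : Differentiable ℂ F)
    {f : ℝ → ℝ} (hFf : ∀ x : ℝ, F x = f x) {σ M : ℝ} (hσ : 0 ≤ σ)
    (hM : ∀ z : ℂ, ‖F z‖ ≤ M * Real.exp (σ * |z.im|)) (N : ℕ) {ρ : ℝ} (hρ : 0 < ρ) (t : ℝ) :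
    |iteratedDeriv N f t| ≤ N ! * (M * Real.exp (σ * ρ)) / ρ ^ N := by
  have hM0 : 0 ≤ M := nonneg_of_mul_nonneg_left ((norm_nonneg _).trans (hM 0)) (Real.exp_pos _)
  rw [iteratedDeriv_real_of_complex hF hFf]
  refine (abs_re_le_norm _).trans <|
    norm_iteratedDeriv_le_of_forall_mem_sphere_norm_le N hρ hF.diffContOnCl fun z hz => ?_
  have him : |z.im| ≤ ρ := by
    simpa [mem_sphere_iff_norm.mp hz] using abs_im_le_norm (z - t)
  exact (hM z).trans (by gcongr)

theorem Complex.norm_exp_mul_I_le (w : ℂ) : ‖exp (w * I)‖ ≤ Real.exp |w.im| := by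
  rw [norm_exp]
  gcongr
  simpa using neg_le_abs w.im

theorem Complex.norm_cos_le (w : ℂ) : ‖cos w‖ ≤ Real.exp |w.im| := by
  have h := norm_add_le (exp (w * I)) (exp (-w * I))
  have h₁ := norm_exp_mul_I_le w
  have h₂ := norm_exp_mul_I_le (-w)
  rw [neg_im, abs_neg] at h₂
  rw [cos, norm_div, Complex.norm_ofNat]
  linarith

theorem Complex.norm_sin_le (w : ℂ) : ‖sin w‖ ≤ Real.exp |w.im| := by
  have h := norm_sub_le (exp (-w * I)) (exp (w * I))
  have h₁ := norm_exp_mul_I_le w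
  have h₂ := norm_exp_mul_I_le (-w)
  rw [neg_im, abs_neg] at h₂
  rw [sin, norm_div, norm_mul, Complex.norm_ofNat, norm_I, mul_one]
  linarith

noncomputable def trigPoly (n : ℕ) (a b : ℕ → ℝ) (t : ℝ) : ℝ :=
  a 0 + ∑ j ∈ Icc 1 n, (a j * Real.cos (j * t) + b j * Real.sin (j * t))

noncomputable def complexTrigPoly (n : ℕ) (a b : ℕ → ℝ) (z : ℂ) : ℂ :=
  a 0 + ∑ j ∈ Icc 1 n, (a j * cos (j * z) + b j * sin (j * z))

section TrigPoly

variable (n : ℕ) (a b : ℕ → ℝ)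

theorem complexTrigPoly_ofReal (t : ℝ) : complexTrigPoly n a b t = trigPoly n a b t := by
  unfold complexTrigPoly trigPoly
  push_cast
  rfl

theorem differentiable_complexTrigPoly : Differentiable ℂ (complexTrigPoly n a b) := by
  unfold complexTrigPoly
  fun_prop

theorem norm_complexTrigPoly_le (z : ℂ) :
    ‖complexTrigPoly n a b z‖ ≤
      (|a 0| + ∑ j ∈ Icc 1 n, (|a j| + |b j|)) * Real.exp (n * |z.im|) := by
  set E := Real.exp (n * |z.im|)
  have hE : 1 ≤ E := Real.one_le_exp (by positivity)
  have hexp : ∀ j ∈ Icc 1 n, Real.exp |((j : ℂ) * z).im| ≤ E := by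
    intro j hj
    have : (j : ℝ) ≤ n := Nat.cast_le.mpr (mem_Icc.mp hj).2
    simp only [mul_im, natCast_re, natCast_im, zero_mul, add_zero, abs_mul, Nat.abs_cast, E]
    gcongr
  have hterm : ∀ j ∈ Icc 1 n,
      ‖(a j : ℂ) * cos (j * z) + b j * sin (j * z)‖ ≤ (|a j| + |b j|) * E := by
    intro j hj
    rw [add_mul]
    refine (norm_add_le _ _).trans (add_le_add ?_ ?_) <;>
      rw [norm_mul, norm_real, Real.norm_eq_abs] <;> gcongr
    · exact (norm_cos_le _).trans (hexp j hj)
    · exact (norm_sin_le _).trans (hexp j hj)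
  calc ‖complexTrigPoly n a b z‖
      _ ≤ |a 0| + ∑ j ∈ Icc 1 n, ‖(a j : ℂ) * cos (j * z) + b j * sin (j * z)‖ := by
        refine (norm_add_le _ _).trans ?_
        rw [norm_real, Real.norm_eq_abs]
        gcongr
        exact norm_sum_le _ _
      _ ≤ |a 0| * E + ∑ j ∈ Icc 1 n, (|a j| + |b j|) * E :=
        add_le_add (le_mul_of_one_le_right (abs_nonneg _) hE) (sum_le_sum hterm)
      _ = (|a 0| + ∑ j ∈ Icc 1 n, (|a j| + |b j|)) * E := by rw [add_mul, sum_mul]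

theorem contDiff_trigPoly : ContDiff ℝ ∞ (trigPoly n a b) := by
  rw [show trigPoly n a b = fun t : ℝ => (complexTrigPoly n a b t).re from
    funext fun t => by simp [complexTrigPoly_ofReal]]
  exact (differentiable_complexTrigPoly n a b).contDiff.real_of_complex

theorem abs_trigPoly_le (t : ℝ) :
    |trigPoly n a b t| ≤ |a 0| + ∑ j ∈ Icc 1 n, (|a j| + |b j|) := by
  simpa [complexTrigPoly_ofReal] using norm_complexTrigPoly_le n a b t

end TrigPoly

end ExponentialType

theorem natCast_mul_le_of_le_mul_div_pow {A M x : ℝ} {N : ℕ} (hN : N ≠ 0) (hA : 0 ≤ A)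
    (hAM : A ≤ M) (hx : 0 ≤ x) (h : A ≤ M * (x / N) ^ N) : N * A ≤ x * M := by
  have hM : 0 ≤ M := hA.trans hAM
  have hN' : (0 : ℝ) < N := by positivity
  rcases le_or_gt (x / N) 1 with hx1 | hx1
  · have : A ≤ M * (x / N) :=
      h.trans (mul_le_mul_of_nonneg_left (pow_le_of_le_one (by positivity) hx1 hN) hM)
    calc N * A ≤ N * (M * (x / N)) := by gcongr
      _ = x * M := by field_simp
  · exact mul_le_mul ((one_lt_div hN').mp hx1).le hAM hA hx

theorem HasZeros.card_mul_abs_trigPoly_le {n : ℕ} {a b : ℕ → ℝ} {Z : Multiset ℝ}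
    (hZ : HasZeros (trigPoly n a b) Z) {M : ℝ} (hM : ∀ t, |trigPoly n a b t| ≤ M) {t₀ r : ℝ}
    (hr0 : 0 ≤ r) (hr : ∀ x ∈ Z, |t₀ - x| ≤ r) :
    Multiset.card Z * |trigPoly n a b t₀| ≤ Real.exp 1 * n * r * M := by
  set N := Multiset.card Z
  have hM0 : 0 ≤ M := (abs_nonneg _).trans (hM 0)
  rcases Nat.eq_zero_or_pos N with hN | hN
  · rw [hN, Nat.cast_zero, zero_mul]
    positivity
  obtain ⟨x₀, hx₀⟩ := Multiset.card_pos_iff_exists_mem.mp hN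
  rcases Nat.eq_zero_or_pos n with rfl | hn
  · have hconst : trigPoly 0 a b t₀ = trigPoly 0 a b x₀ := by simp [trigPoly]
    rw [hconst, show trigPoly 0 a b x₀ = 0 by simpa using hZ x₀ 0 (Multiset.count_pos.mpr hx₀)]
    simp
  have hF := differentiable_complexTrigPoly n a b
  have hFM := norm_le_mul_exp_of_exponentialType hF (norm_complexTrigPoly_le n a b)
    fun x => by simpa [complexTrigPoly_ofReal] using hM x
  -- `ρ = N / n` minimises `e^{nρ} / ρ^N`
  set ρ : ℝ := N / n
  have hρ : 0 < ρ := by positivity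
  have hherm := hZ.abs_mul_factorial_le (contDiff_trigPoly n a b)
    (abs_iteratedDeriv_le_of_exponentialType hF (complexTrigPoly_ofReal n a b) (Nat.cast_nonneg n)
      hFM N hρ) hr
  refine natCast_mul_le_of_le_mul_div_pow hN.ne' (abs_nonneg _) (hM t₀) (by positivity) ?_
  have hexp : Real.exp (n * ρ) = Real.exp 1 ^ N := by
    rw [← Real.exp_nat_mul, mul_one, mul_div_cancel₀ _ (by positivity)]
  have hfac : (0 : ℝ) < N ! := by positivity
  calc |trigPoly n a b t₀| = |trigPoly n a b t₀| * N ! / N ! := by field_simp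
    _ ≤ N ! * (M * Real.exp (n * ρ)) / ρ ^ N * r ^ N / N ! := by gcongr
    _ = M * (Real.exp 1 * n * r / N) ^ N := by
      rw [hexp, div_pow (N : ℝ), div_pow, mul_pow, mul_pow]
      field_simp

theorem zeros_in_small_value_intervals_general (n : ℕ) (a b : ℕ → ℝ) (S : ℝ → ℝ)
    (hS : ∀ t, S t = a 0 + ∑ j ∈ Finset.Icc 1 n,
      (a j * Real.cos (j * t) + b j * Real.sin (j * t)))
    (α : ℝ) (hα : α ∈ Set.Ioo (0 : ℝ) 1)
    (M : ℝ) (hM : M = ⨆ t : ℝ, |S t|)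
    (m : ℕ) (u v : Fin m → ℝ)
    (hunion : {t : ℝ | t ∈ Set.Ico 0 (2 * Real.pi) ∧ |S t| ≤ α * M} =
      ⋃ j, Set.Icc (u j) (v j))
    (y : Fin m → ℝ) (hy : ∀ j, y j ∈ Set.Icc (u j) (v j))
    (hySy : ∀ j, |S (y j)| = α * M)
    (Z : Fin m → Finset ℝ) (mult : ℝ → ℕ)
    (hZ : ∀ j, ∀ x ∈ Z j, x ∈ Set.Icc (u j) (v j))
    (hmul : ∀ j, ∀ x ∈ Z j, ∀ i < mult x, iteratedDeriv i S x = 0) :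
    ∀ j, (∑ x ∈ Z j, (mult x : ℝ)) ≤ Real.exp 1 * n / α * (v j - u j) := by
  intro j
  obtain rfl : S = trigPoly n a b := funext hS
  have hSM : ∀ t, |trigPoly n a b t| ≤ M := fun t =>
    hM ▸ le_ciSup ⟨_, Set.forall_mem_range.mpr (abs_trigPoly_le n a b)⟩ t
  have hM0 : M ≠ 0 := by
    rintro rfl
    have hclosed : IsClosed (Set.Ico 0 (2 * Real.pi)) := by
      convert isClosed_iUnion_of_finite fun j => isClosed_Icc (a := u j) (b := v j)
      rw [← hunion]
      ext t
      simpa using fun _ _ => abs_nonpos_iff.mp (hSM t)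
    exact absurd (isClosed_Ico_iff.mp hclosed) (by simp [Real.pi_pos])
  have hcount := (hasZeros_sum_replicate (hmul j)).card_mul_abs_trigPoly_le hSM
    (sub_nonneg.mpr ((hy j).1.trans (hy j).2)) (t₀ := y j) fun x hx => by
      obtain ⟨x', hx', hxx'⟩ := Multiset.mem_sum.mp hx
      rw [Multiset.eq_of_mem_replicate hxx', ← Real.dist_eq]
      exact Real.dist_le_of_mem_Icc (hy j) (hZ j x' hx')
  rw [Multiset.card_sum, hySy j] at hcount
  simp only [Multiset.card_replicate, Nat.cast_sum] at hcount
  have hMpos : 0 < M := lt_of_le_of_ne ((abs_nonneg _).trans (hSM 0)) (Ne.symm hM0)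
  rw [div_mul_eq_mul_div, le_div_iff₀ hα.1]
  nlinarith

theorem zeros_in_small_value_intervals (n : ℕ) (a b : ℕ → ℝ) (S : ℝ → ℝ)
    (hS : ∀ t, S t = a 0 + ∑ j ∈ Finset.Icc 1 n,
      (a j * Real.cos (j * t) + b j * Real.sin (j * t)))
    (α : ℝ) (hα : α ∈ Set.Ioo (0 : ℝ) 1)
    (M : ℝ) (hM : M = ⨆ t : ℝ, |S t|)
    (m : ℕ) (u v : Fin m → ℝ) (huv : ∀ j, u j ≤ v j)
    (hdisj : Pairwise (Function.onFun Disjoint fun j => Set.Icc (u j) (v j)))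
    (hunion : {t : ℝ | t ∈ Set.Ico 0 (2 * Real.pi) ∧ |S t| ≤ α * M} =
      ⋃ j, Set.Icc (u j) (v j))
    (y : Fin m → ℝ) (hy : ∀ j, y j ∈ Set.Icc (u j) (v j))
    (hySy : ∀ j, |S (y j)| = α * M)
    (Z : Fin m → Finset ℝ) (mult : ℝ → ℕ)
    (hZ : ∀ j, ∀ x ∈ Z j, x ∈ Set.Icc (u j) (v j))
    (hmul : ∀ j, ∀ x ∈ Z j, ∀ i < mult x, iteratedDeriv i S x = 0) :
    ∀ j, (∑ x ∈ Z j, (mult x : ℝ)) ≤ Real.exp 1 * n / α * (v j - u j) :=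
  zeros_in_small_value_intervals_general n a b S hS α hα M hM m u v hunion y hy hySy Z mult hZ hmul
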